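/- Let N ≥ 2, α > 1, p > 0 and ξ = (αp)^{-1/α}. Let η > 0 with η ≠ ξ, and let h be the positive solution, C¹ on [0,∞) and C² on (0,∞), of h'' + ((N-1)/r)h' = (1/α)h^{-α} − p with h(0) = η and h'(0) = 0. Then the smallest positive critical point r_1(η) = min{ r > 0 : h'(r) = 0 } satisfies r_1(η) ≥ sqrt( 2Nα(η − ξ) / (ξ^{-α} − η^{-α}) ). In particular, r_1(η) → ∞ as η → ∞. -/

import Mathlib

open Set Filter

noncomputable section

/-- A positive solution (`C¹` on `[0,∞)`, `C²` on `(0,∞)`) of the radial equation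
`h'' + ((N-1)/r) h' = (1/α) h^(-α) - p` with `h(0) = η` and `h'(0) = 0`. -/
def IsSolWithData (N : ℕ) (α p η : ℝ) (h : ℝ → ℝ) : Prop :=
  (∀ r ∈ Ici (0 : ℝ), 0 < h r) ∧
  ContDiffOn ℝ 1 h (Ici 0) ∧
  ContDiffOn ℝ 2 h (Ioi 0) ∧
  h 0 = η ∧
  derivWithin h (Ici 0) 0 = 0 ∧
  (∀ r ∈ Ioi (0 : ℝ),
    deriv (deriv h) r + ((N : ℝ) - 1) / r * deriv h r = 1 / α * h r ^ (-α) - p)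

open Topology

private lemma neg_on_Ioc {u : ℝ → ℝ} {b : ℝ} (hb : 0 < b)
    (hc : ContinuousOn u (Ioi 0))
    (hd : ∀ r ∈ Ioo (0:ℝ) b, deriv u r < 0)
    (hlim : Tendsto u (𝓝[>] (0:ℝ)) (𝓝 0)) :
    ∀ r ∈ Ioc (0:ℝ) b, u r < 0 := by
  have anti : StrictAntiOn u (Ioc 0 b) := by
    apply strictAntiOn_of_deriv_neg (convex_Ioc 0 b) (hc.mono Ioc_subset_Ioi_self)
    rwa [interior_Ioc]
  intro r hr
  have h2 : r/2 ∈ Ioc (0:ℝ) b := ⟨by linarith [hr.1], by linarith [hr.1, hr.2]⟩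
  have hrr : u r < u (r/2) := anti h2 hr (by linarith [hr.1])
  have hle : u (r/2) ≤ 0 := by
    refine ge_of_tendsto hlim ?_
    filter_upwards [Ioo_mem_nhdsGT_of_mem ⟨le_refl (0:ℝ), half_pos hr.1⟩] with t ht
    exact (anti ⟨ht.1, le_trans ht.2.le h2.2⟩ h2 ht.2).le
  linarith

private lemma nonneg_on_Ioc {u : ℝ → ℝ} {b : ℝ} (hb : 0 < b)
    (hc : ContinuousOn u (Ioi 0)) (hdiff : DifferentiableOn ℝ u (Ioi 0))
    (hd : ∀ r ∈ Ioo (0:ℝ) b, 0 ≤ deriv u r)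
    (hlim : Tendsto u (𝓝[>] (0:ℝ)) (𝓝 0)) :
    ∀ r ∈ Ioc (0:ℝ) b, 0 ≤ u r := by
  have mono : MonotoneOn u (Ioc 0 b) := by
    apply monotoneOn_of_deriv_nonneg (convex_Ioc 0 b) (hc.mono Ioc_subset_Ioi_self)
    · rw [interior_Ioc]; exact hdiff.mono Ioo_subset_Ioi_self
    · rwa [interior_Ioc]
  intro r hr
  have h2 : r/2 ∈ Ioc (0:ℝ) b := ⟨by linarith [hr.1], by linarith [hr.1, hr.2]⟩
  have hle : 0 ≤ u (r/2) := by
    refine le_of_tendsto hlim ?_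
    filter_upwards [Ioo_mem_nhdsGT_of_mem ⟨le_refl (0:ℝ), half_pos hr.1⟩] with t ht
    exact mono ⟨ht.1, le_trans ht.2.le h2.2⟩ h2 ht.2.le
  exact hle.trans (mono h2 hr (by linarith [hr.1]))

set_option maxHeartbeats 1000000 in
private lemma core (N : ℕ) (hN : 2 ≤ N) (α p : ℝ) (hα : 1 < α) (hp : 0 < p)
    (ξ : ℝ) (hξ : ξ = (α * p) ^ (-(1 / α)))
    (s : ℝ) (hs : s = 1 ∨ s = -1)
    (η : ℝ) (hη : 0 < η) (hsη : 0 < s * (η - ξ))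
    (h : ℝ → ℝ) (hsol : IsSolWithData N α p η h)
    (r₁ : ℝ) (hr₁ : IsLeast {r : ℝ | 0 < r ∧ deriv h r = 0} r₁) :
    2 * N * α * (η - ξ) / (ξ ^ (-α) - η ^ (-α)) ≤ r₁ ^ 2 := by
  obtain ⟨hpos, hC1, hC2, h0, hd0, hODE⟩ := hsol
  obtain ⟨⟨hr₁pos, hr₁crit⟩, hr₁least⟩ := hr₁
  obtain ⟨m, rfl⟩ : ∃ m, N = m + 2 := ⟨N - 2, by omega⟩
  have αpos : 0 < α := by linarith
  have hαp : 0 < α * p := by positivity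
  have ξpos : 0 < ξ := hξ ▸ Real.rpow_pos_of_pos hαp _
  have hξα : ξ ^ (-α) = α * p := by
    rw [hξ, ← Real.rpow_mul hαp.le,
      show -(1/α) * -α = 1 by field_simp, Real.rpow_one]
  have hsne : s ≠ 0 := by rcases hs with rfl | rfl <;> norm_num
  have hs2 : s * s = 1 := by rcases hs with rfl | rfl <;> norm_num
  -- f-sign lemma
  have fsign : ∀ x : ℝ, 0 < x → 0 < s * (x - ξ) → s * (1 / α * x ^ (-α) - p) < 0 := by
    intro x hx hxs
    rcases hs with rfl | rfl
    · have hx' : ξ < x := by nlinarith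
      have : x ^ (-α) < α * p := hξα ▸ Real.rpow_lt_rpow_of_neg ξpos hx' (by linarith)
      have h1 : 1/α * x ^ (-α) < 1/α * (α * p) := by
        apply mul_lt_mul_of_pos_left this; positivity
      have h2 : 1/α * (α * p) = p := by field_simp
      nlinarith
    · have hx' : x < ξ := by nlinarith
      have : α * p < x ^ (-α) := hξα ▸ Real.rpow_lt_rpow_of_neg hx hx' (by linarith)
      have h1 : 1/α * (α * p) < 1/α * x ^ (-α) := by
        apply mul_lt_mul_of_pos_left this; positivity
      have h2 : 1/α * (α * p) = p := by field_simp
      nlinarith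
  set c : ℝ := s * (ξ ^ (-α) - η ^ (-α)) / α with hc_def
  have hc : 0 < c := by
    rcases hs with rfl | rfl
    · have : η ^ (-α) < ξ ^ (-α) := Real.rpow_lt_rpow_of_neg ξpos (by nlinarith) (by linarith)
      rw [hc_def]; exact div_pos (by linarith) αpos
    · have : ξ ^ (-α) < η ^ (-α) := Real.rpow_lt_rpow_of_neg hη (by nlinarith) (by linarith)
      rw [hc_def]; exact div_pos (by linarith) αpos
  have fsign2 : ∀ x : ℝ, 0 < x → s * (x - η) ≤ 0 →
      0 ≤ s * (1 / α * x ^ (-α) - p) + c := by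
    intro x hx hxs
    have hpξ : p = ξ ^ (-α) / α := by rw [hξα]; field_simp
    rcases hs with rfl | rfl
    · have hx' : x ≤ η := by nlinarith
      have hmono : η ^ (-α) ≤ x ^ (-α) := Real.rpow_le_rpow_of_nonpos hx hx' (by linarith)
      have key : 0 ≤ (x ^ (-α) - η ^ (-α)) / α := div_nonneg (by linarith) αpos.le
      have heq : 1 * (1 / α * x ^ (-α) - ξ ^ (-α) / α) + 1 * (ξ ^ (-α) - η ^ (-α)) / α
          = (x ^ (-α) - η ^ (-α)) / α := by ring
      rw [hc_def, hpξ, heq]; exact key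
    · have hx' : η ≤ x := by nlinarith
      have hmono : x ^ (-α) ≤ η ^ (-α) := Real.rpow_le_rpow_of_nonpos hη hx' (by linarith)
      have key : 0 ≤ (η ^ (-α) - x ^ (-α)) / α := div_nonneg (by linarith) αpos.le
      have heq : -1 * (1 / α * x ^ (-α) - ξ ^ (-α) / α) + -1 * (ξ ^ (-α) - η ^ (-α)) / α
          = (η ^ (-α) - x ^ (-α)) / α := by ring
      rw [hc_def, hpξ, heq]; exact key
    -- differentiability plumbing
  have hdiffh : DifferentiableOn ℝ h (Ioi 0) := hC2.differentiableOn (by norm_num)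
  have hhAt : ∀ r ∈ Ioi (0:ℝ), DifferentiableAt ℝ h r := fun r hr =>
    (hdiffh r hr).differentiableAt (isOpen_Ioi.mem_nhds hr)
  have hC1' : ContDiffOn ℝ 1 (deriv h) (Ioi 0) :=
    hC2.deriv_of_isOpen isOpen_Ioi (by norm_num)
  have hdiff' : DifferentiableOn ℝ (deriv h) (Ioi 0) := hC1'.differentiableOn one_ne_zero
  have hd'At : ∀ r ∈ Ioi (0:ℝ), DifferentiableAt ℝ (deriv h) r := fun r hr =>
    (hdiff' r hr).differentiableAt (isOpen_Ioi.mem_nhds hr)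
  have hcont' : ContinuousOn (deriv h) (Ioi 0) := hdiff'.continuousOn
  have hconth : ContinuousOn h (Ici 0) := hC1.continuousOn
  -- deriv h tends to 0 at 0⁺
  have hdW : ContinuousOn (derivWithin h (Ici 0)) (Ici 0) :=
    hC1.continuousOn_derivWithin (uniqueDiffOn_Ici 0) le_rfl
  have t1 : Tendsto (derivWithin h (Ici 0)) (𝓝[Ici 0] (0:ℝ)) (𝓝 0) := by
    have := (hdW 0 self_mem_Ici)
    rwa [ContinuousWithinAt, hd0] at this
  have t2 : Tendsto (deriv h) (𝓝[>] (0:ℝ)) (𝓝 0) := by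
    refine Tendsto.congr' ?_ (t1.mono_left (nhdsWithin_mono _ Ioi_subset_Ici_self))
    filter_upwards [self_mem_nhdsWithin] with r (hr : r ∈ Ioi (0:ℝ))
    exact derivWithin_of_mem_nhds (Ici_mem_nhds hr)
  -- the function g
  set g : ℝ → ℝ := fun r => r ^ (m+1) * deriv h r with hg_def
  have hgc : ContinuousOn g (Ioi 0) := (continuous_pow (m+1)).continuousOn.mul hcont'
  have hgd : ∀ r ∈ Ioi (0:ℝ),
      HasDerivAt g (r ^ (m+1) * (1 / α * h r ^ (-α) - p)) r := by
    intro r hr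
    have hr0 : (0:ℝ) < r := hr
    have Hd2 : HasDerivAt (deriv h) (deriv (deriv h) r) r := (hd'At r hr).hasDerivAt
    have H := (hasDerivAt_pow (m+1) r).mul Hd2
    have heq := hODE r hr
    have hder2 : deriv (deriv h) r
        = (1 / α * h r ^ (-α) - p) - ((m:ℝ) + 1) / r * deriv h r := by
      push_cast at heq ⊢
      rw [show (m:ℝ) + 2 - 1 = (m:ℝ) + 1 by ring] at heq
      linarith
    rw [hder2] at H
    refine H.congr_deriv ?_
    simp only [Nat.add_sub_cancel]
    push_cast
    field_simp
    ring
  have hgt : Tendsto g (𝓝[>] (0:ℝ)) (𝓝 0) := by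
    have hpow : Tendsto (fun r : ℝ => r ^ (m+1)) (𝓝[>] (0:ℝ)) (𝓝 0) := by
      have := (continuous_pow (m+1)).tendsto (0:ℝ)
      rw [zero_pow (by omega : m + 1 ≠ 0)] at this
      exact this.mono_left nhdsWithin_le_nhds
    simpa using hpow.mul t2
  have hgderiv : ∀ r ∈ Ioi (0:ℝ), deriv g r = r ^ (m+1) * (1 / α * h r ^ (-α) - p) :=
    fun r hr => (hgd r hr).deriv
  -- the function u = s * g
  set u : ℝ → ℝ := fun r => s * g r with hu_def
  have huc : ContinuousOn u (Ioi 0) := continuousOn_const.mul hgc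
  have hut : Tendsto u (𝓝[>] (0:ℝ)) (𝓝 0) := by
    simpa using (tendsto_const_nhds (x := s)).mul hgt
  have huderiv : ∀ r ∈ Ioi (0:ℝ),
      deriv u r = r ^ (m+1) * (s * (1 / α * h r ^ (-α) - p)) := by
    intro r hr
    rw [hu_def]
    rw [deriv_const_mul _ (hgd r hr).differentiableAt, hgderiv r hr]
    ring
  have hudiff : DifferentiableOn ℝ u (Ioi 0) := fun r hr =>
    ((hgd r hr).differentiableAt.const_mul s).differentiableWithinAt
    -- near zero, s*(h r - ξ) > 0
  have hev : ∀ᶠ r in 𝓝[>] (0:ℝ), 0 < s * (h r - ξ) := by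
    have hth : Tendsto h (𝓝[>] (0:ℝ)) (𝓝 η) := by
      have := hconth 0 self_mem_Ici
      rw [ContinuousWithinAt, h0] at this
      exact this.mono_left (nhdsWithin_mono _ Ioi_subset_Ici_self)
    have : Tendsto (fun r => s * (h r - ξ)) (𝓝[>] (0:ℝ)) (𝓝 (s * (η - ξ))) :=
      tendsto_const_nhds.mul (hth.sub tendsto_const_nhds)
    exact this.eventually (eventually_gt_nhds hsη)
  obtain ⟨δ, hδmem, hδ⟩ := mem_nhdsGT_iff_exists_Ioo_subset.mp hev
  have hδpos : (0:ℝ) < δ := hδmem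
  set b₀ : ℝ := min δ r₁ with hb₀_def
  have hb₀ : 0 < b₀ := lt_min hδpos hr₁pos
  have hneg : ∀ r ∈ Ioc (0:ℝ) b₀, u r < 0 := by
    refine neg_on_Ioc hb₀ huc ?_ hut
    intro r hr
    have hrI : r ∈ Ioi (0:ℝ) := hr.1
    rw [huderiv r hrI]
    have h1 : 0 < s * (h r - ξ) := hδ ⟨hr.1, lt_of_lt_of_le hr.2 (min_le_left _ _)⟩
    exact mul_neg_of_pos_of_neg (pow_pos hr.1 _) (fsign (h r) (hpos r (le_of_lt hr.1)) h1)
  have hd_neg_near : ∀ r ∈ Ioc (0:ℝ) b₀, s * deriv h r < 0 := by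
    intro r hr
    by_contra hcon
    push_neg at hcon
    have h1 : 0 ≤ r ^ (m+1) * (s * deriv h r) := mul_nonneg (pow_pos hr.1 _).le hcon
    have h2 : u r = r ^ (m+1) * (s * deriv h r) := by rw [hu_def, hg_def]; ring
    linarith [hneg r hr]
  -- deriv h has sign -s on all of (0, r₁)
  have hder_neg : ∀ r ∈ Ioo (0:ℝ) r₁, s * deriv h r < 0 := by
    intro r₀ hr₀
    rcases lt_trichotomy (s * deriv h r₀) 0 with hlt | heq0 | hgt
    · exact hlt
    · exfalso
      have : deriv h r₀ = 0 := by
        rcases mul_eq_zero.mp heq0 with hh | hh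
        · exact absurd hh hsne
        · exact hh
      exact absurd (hr₁least ⟨hr₀.1, this⟩) (not_le.mpr hr₀.2)
    · exfalso
      set a : ℝ := min b₀ r₀ / 2 with ha_def
      have hapos : 0 < a := by
        have := lt_min hb₀ hr₀.1
        rw [ha_def]; positivity
      have hab₀ : a ≤ b₀ := by
        have h1 := min_le_left b₀ r₀
        rw [ha_def]; linarith
      have har₀ : a < r₀ := by
        have h1 := min_le_right b₀ r₀
        rw [ha_def]; linarith [hr₀.1]
      have hvc : ContinuousOn (fun r => s * deriv h r) (Icc a r₀) := by
        refine (continuousOn_const.mul hcont').mono ?_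
        intro x hx
        exact lt_of_lt_of_le hapos hx.1
      have hva : s * deriv h a < 0 := hd_neg_near a ⟨hapos, hab₀⟩
      have hmem : (0:ℝ) ∈ Ioo (s * deriv h a) (s * deriv h r₀) := ⟨hva, hgt⟩
      obtain ⟨z, hz, hvz⟩ := intermediate_value_Ioo har₀.le hvc hmem
      have hz0 : deriv h z = 0 := by
        rcases mul_eq_zero.mp hvz with hh | hh
        · exact absurd hh hsne
        · exact hh
      have : r₁ ≤ z := hr₁least ⟨lt_trans hapos hz.1, hz0⟩
      linarith [hz.2, hr₀.2]
  -- h is strictly s-antitone on [0, r₁]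
  have hanti : StrictAntiOn (fun r => s * h r) (Icc 0 r₁) := by
    apply strictAntiOn_of_deriv_neg (convex_Icc 0 r₁)
      (continuousOn_const.mul (hconth.mono Icc_subset_Ici_self))
    rw [interior_Icc]
    intro r hr
    show deriv (fun y => s * h y) r < 0
    rw [deriv_const_mul _ (hhAt r hr.1)]
    exact hder_neg r hr
  have hle_η : ∀ r ∈ Icc (0:ℝ) r₁, s * h r ≤ s * η := by
    intro r hr
    rcases eq_or_lt_of_le hr.1 with he | hlt
    · rw [← he, h0]
    · have := hanti ⟨le_refl 0, hr₁pos.le⟩ hr hlt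
      simp only [h0] at this
      exact this.le
  -- h(r₁) is on the ξ-side
  have hξ_r₁ : s * h r₁ ≤ s * ξ := by
    by_contra hcon
    push_neg at hcon
    have hneg' : ∀ r ∈ Ioo (0:ℝ) r₁, deriv u r < 0 := by
      intro r hr
      rw [huderiv r hr.1]
      have hh1 : s * h r₁ < s * h r :=
        hanti ⟨hr.1.le, hr.2.le⟩ ⟨hr₁pos.le, le_refl r₁⟩ hr.2
      have h1 : 0 < s * (h r - ξ) := by
        have hexp : s * (h r - ξ) = s * h r - s * ξ := by ring
        rw [hexp]; linarith
      exact mul_neg_of_pos_of_neg (pow_pos hr.1 _) (fsign (h r) (hpos r hr.1.le) h1)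
    have := neg_on_Ioc hr₁pos huc hneg' hut r₁ ⟨hr₁pos, le_refl r₁⟩
    have hzero : u r₁ = 0 := by rw [hu_def, hg_def]; simp [hr₁crit]
    linarith
    -- the comparison function ψ
  set ψ : ℝ → ℝ := fun r => u r + c * r ^ (m+2) / ((m:ℝ) + 2) with hψ_def
  have hm2 : ((m:ℝ) + 2) ≠ 0 := by positivity
  have hψd : ∀ r ∈ Ioi (0:ℝ),
      HasDerivAt ψ (r ^ (m+1) * (s * (1 / α * h r ^ (-α) - p) + c)) r := by
    intro r hr
    have Hq : HasDerivAt (fun r : ℝ => c * r ^ (m+2) / ((m:ℝ) + 2))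
        (c * ((m:ℝ) + 2) * r ^ (m+1) / ((m:ℝ) + 2)) r := by
      have := ((hasDerivAt_pow (m+2) r).const_mul c).div_const ((m:ℝ) + 2)
      rw [show m + 2 - 1 = m + 1 from rfl] at this
      refine this.congr_deriv ?_
      push_cast
      ring
    have H := ((hgd r hr).const_mul s).add Hq
    refine H.congr_deriv ?_
    field_simp
  have hψc : ContinuousOn ψ (Ioi 0) := by
    rw [hψ_def]
    exact huc.add ((continuous_const.mul (continuous_pow (m+2))).div_const _).continuousOn
  have hψdiff : DifferentiableOn ℝ ψ (Ioi 0) := fun r hr =>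
    ((hψd r hr).differentiableAt).differentiableWithinAt
  have hψt : Tendsto ψ (𝓝[>] (0:ℝ)) (𝓝 0) := by
    rw [hψ_def]
    have hcontq : Continuous (fun r : ℝ => c * r ^ (m+2) / ((m:ℝ)+2)) :=
      (continuous_const.mul (continuous_pow (m+2))).div_const _
    have hq := hcontq.tendsto (0:ℝ)
    simp only [zero_pow (by omega : m+2 ≠ 0), mul_zero, zero_div] at hq
    simpa using hut.add (hq.mono_left nhdsWithin_le_nhds)
  have hψnonneg : ∀ r ∈ Ioc (0:ℝ) r₁, 0 ≤ ψ r := by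
    refine nonneg_on_Ioc hr₁pos hψc hψdiff ?_ hψt
    intro r hr
    rw [(hψd r hr.1).deriv]
    have h1 : s * (h r - η) ≤ 0 := by
      have h2 := hle_η r ⟨hr.1.le, hr.2.le⟩
      have hexp : s * (h r - η) = s * h r - s * η := by ring
      rw [hexp]; linarith
    exact mul_nonneg (pow_pos hr.1 _).le (fsign2 (h r) (hpos r hr.1.le) h1)
  -- the comparison function φ
  set φ : ℝ → ℝ := fun r => s * (h r - η) + c * r ^ 2 / (2 * ((m:ℝ) + 2)) with hφ_def
  have hφd : ∀ r ∈ Ioi (0:ℝ),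
      HasDerivAt φ (s * deriv h r + c * r / ((m:ℝ) + 2)) r := by
    intro r hr
    have H1 : HasDerivAt (fun r => s * (h r - η)) (s * deriv h r) r :=
      (((hhAt r hr).hasDerivAt).sub_const η).const_mul s
    have H2 : HasDerivAt (fun r : ℝ => c * r ^ 2 / (2 * ((m:ℝ) + 2)))
        (c * (2 * r) / (2 * ((m:ℝ)+2))) r := by
      have := ((hasDerivAt_pow 2 r).const_mul c).div_const (2 * ((m:ℝ) + 2))
      refine this.congr_deriv ?_
      norm_num
    have H := H1.add H2
    refine H.congr_deriv ?_
    field_simp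
  have hφmono : MonotoneOn φ (Icc 0 r₁) := by
    have hφc : ContinuousOn φ (Icc 0 r₁) := by
      rw [hφ_def]
      exact (continuousOn_const.mul
          ((hconth.mono Icc_subset_Ici_self).sub continuousOn_const)).add
        ((continuous_const.mul (continuous_pow 2)).div_const _).continuousOn
    apply monotoneOn_of_deriv_nonneg (convex_Icc 0 r₁) hφc
    · rw [interior_Icc]
      exact fun r hr => (hφd r hr.1).differentiableAt.differentiableWithinAt
    · rw [interior_Icc]
      intro r hr
      rw [(hφd r hr.1).deriv]
      have hψr := hψnonneg r ⟨hr.1, hr.2.le⟩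
      have hexp : ψ r = r ^ (m+1) * (s * deriv h r + c * r / ((m:ℝ)+2)) := by
        rw [hψ_def, hu_def, hg_def]
        simp only []
        field_simp
        ring
      rw [hexp] at hψr
      by_contra hcon
      push_neg at hcon
      have := mul_neg_of_pos_of_neg (pow_pos hr.1 (m+1)) hcon
      linarith
  -- conclude
  have hφ0 : φ 0 = 0 := by rw [hφ_def]; simp [h0]
  have hφr₁ : φ 0 ≤ φ r₁ :=
    hφmono (left_mem_Icc.mpr hr₁pos.le) (right_mem_Icc.mpr hr₁pos.le) hr₁pos.le
  rw [hφ0] at hφr₁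
  have key : 0 ≤ s * (h r₁ - η) + c * r₁ ^ 2 / (2 * ((m:ℝ) + 2)) := by
    rw [hφ_def] at hφr₁
    exact hφr₁
  have skey : s * (η - ξ) ≤ c * r₁ ^ 2 / (2 * ((m:ℝ) + 2)) := by
    have e1 : s * (h r₁ - η) = s * h r₁ - s * η := by ring
    have e2 : s * (η - ξ) = s * η - s * ξ := by ring
    rw [e1] at key
    rw [e2]
    linarith
  have hm2' : (0:ℝ) < 2 * ((m:ℝ) + 2) := by positivity
  have hkey2 : 2 * ((m:ℝ) + 2) * (s * (η - ξ)) ≤ c * r₁ ^ 2 := by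
    have h1 := mul_le_mul_of_nonneg_left skey hm2'.le
    have heq2 : 2 * ((m:ℝ)+2) * (c * r₁ ^ 2 / (2 * ((m:ℝ)+2))) = c * r₁ ^ 2 := by
      field_simp
    rw [heq2] at h1
    exact h1
  have hfin := mul_le_mul_of_nonneg_left hkey2 αpos.le
  rcases hs with rfl | rfl
  · have hD : ξ ^ (-α) - η ^ (-α) = α * c := by rw [hc_def]; field_simp
    rw [hD, div_le_iff₀ (by positivity : (0:ℝ) < α * c)]
    push_cast
    nlinarith [hfin]
  · have hD : ξ ^ (-α) - η ^ (-α) = -(α * c) := by rw [hc_def]; field_simp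
    rw [hD, div_le_iff_of_neg (by simp [neg_neg]; positivity : -(α * c) < 0)]
    push_cast
    nlinarith [hfin]

/-- The smallest positive critical point `r₁(η)` of the solution with initial value
`η ≠ ξ` satisfies `r₁(η) ≥ sqrt(2Nα(η-ξ)/(ξ^(-α) - η^(-α)))`; in particular
`r₁(η) → ∞` as `η → ∞`. -/
theorem first_critical_point_lower_bound
    (N : ℕ) (hN : 2 ≤ N) (α p : ℝ) (hα : 1 < α) (hp : 0 < p)
    (ξ : ℝ) (hξ : ξ = (α * p) ^ (-(1 / α))) :
    (∀ η : ℝ, 0 < η → η ≠ ξ →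
      ∀ h : ℝ → ℝ, IsSolWithData N α p η h →
        ∀ r₁ : ℝ, IsLeast {r : ℝ | 0 < r ∧ deriv h r = 0} r₁ →
          Real.sqrt (2 * N * α * (η - ξ) / (ξ ^ (-α) - η ^ (-α))) ≤ r₁) ∧
    (∀ M : ℝ, ∃ η₀ : ℝ, ∀ η : ℝ, η₀ < η → η ≠ ξ →
      ∀ h : ℝ → ℝ, IsSolWithData N α p η h →
        ∀ r₁ : ℝ, IsLeast {r : ℝ | 0 < r ∧ deriv h r = 0} r₁ →
          M ≤ r₁) := by
  have αpos : 0 < α := by linarith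
  have hαp : 0 < α * p := by positivity
  have ξpos : 0 < ξ := hξ ▸ Real.rpow_pos_of_pos hαp _
  have hξα : ξ ^ (-α) = α * p := by
    rw [hξ, ← Real.rpow_mul hαp.le,
      show -(1/α) * -α = 1 by field_simp, Real.rpow_one]
  have hN2 : (2:ℝ) ≤ (N:ℝ) := by exact_mod_cast hN
  have hNR : (0:ℝ) < (N:ℝ) := by linarith
  have part1 : ∀ η : ℝ, 0 < η → η ≠ ξ →
      ∀ h : ℝ → ℝ, IsSolWithData N α p η h →
        ∀ r₁ : ℝ, IsLeast {r : ℝ | 0 < r ∧ deriv h r = 0} r₁ →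
          Real.sqrt (2 * N * α * (η - ξ) / (ξ ^ (-α) - η ^ (-α))) ≤ r₁ := by
    intro η hη hηξ h hsol r₁ hr₁
    have hr₁pos : 0 < r₁ := hr₁.1.1
    rcases hηξ.lt_or_gt with hlt | hgt
    · have hcore := core N hN α p hα hp ξ hξ (-1) (Or.inr rfl) η hη
        (by linarith [hlt] : 0 < (-1:ℝ) * (η - ξ)) h hsol r₁ hr₁
      calc Real.sqrt (2 * N * α * (η - ξ) / (ξ ^ (-α) - η ^ (-α)))
          ≤ Real.sqrt (r₁ ^ 2) := Real.sqrt_le_sqrt hcore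
        _ = r₁ := Real.sqrt_sq hr₁pos.le
    · have hcore := core N hN α p hα hp ξ hξ 1 (Or.inl rfl) η hη
        (by linarith [hgt] : 0 < (1:ℝ) * (η - ξ)) h hsol r₁ hr₁
      calc Real.sqrt (2 * N * α * (η - ξ) / (ξ ^ (-α) - η ^ (-α)))
          ≤ Real.sqrt (r₁ ^ 2) := Real.sqrt_le_sqrt hcore
        _ = r₁ := Real.sqrt_sq hr₁pos.le
  refine ⟨part1, ?_⟩
  intro M
  refine ⟨ξ + p * M ^ 2 / (2 * N) + p, ?_⟩
  intro η hη hηξ h hsol r₁ hr₁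
  have hξη : ξ < η := by
    have h1 : 0 ≤ p * M ^ 2 / (2 * N) := by positivity
    linarith
  have hηpos : 0 < η := lt_trans ξpos hξη
  have hDpos : 0 < ξ ^ (-α) - η ^ (-α) := by
    have := Real.rpow_lt_rpow_of_neg ξpos hξη (by linarith : -α < 0)
    linarith
  have hDle : ξ ^ (-α) - η ^ (-α) ≤ α * p := by
    have : 0 < η ^ (-α) := Real.rpow_pos_of_pos hηpos _
    linarith [hξα]
  have harg1 : 2 * N * (η - ξ) / p ≤ 2 * N * α * (η - ξ) / (ξ ^ (-α) - η ^ (-α)) := by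
    rw [div_le_div_iff₀ hp hDpos]
    have hfac : (0:ℝ) ≤ 2 * N * (η - ξ) := by
      have : (0:ℝ) ≤ η - ξ := by linarith
      positivity
    nlinarith [mul_le_mul_of_nonneg_left hDle hfac]
  have hM2 : M ^ 2 ≤ 2 * N * (η - ξ) / p := by
    rw [le_div_iff₀ hp]
    have e : 2 * (N:ℝ) * (p * M ^ 2 / (2 * N)) = p * M ^ 2 := by field_simp
    have k1 : p * M ^ 2 / (2 * N) + p ≤ η - ξ := by linarith
    have k2 := mul_le_mul_of_nonneg_left k1 (by positivity : (0:ℝ) ≤ 2 * N)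
    nlinarith [k2, e, hp, hNR]
  calc M ≤ |M| := le_abs_self M
    _ = Real.sqrt (M ^ 2) := (Real.sqrt_sq_eq_abs M).symm
    _ ≤ Real.sqrt (2 * N * α * (η - ξ) / (ξ ^ (-α) - η ^ (-α))) :=
        Real.sqrt_le_sqrt (by linarith)
    _ ≤ r₁ := part1 η hηpos hηξ h hsol r₁ hr₁
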